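/- If a changed subset of W-votes in the Copeland construction makes the pairwise contest between a and b an exact tie, then the total weight of W-votes preferring a to b equals K, yielding a sub-multiset of W summing to K. -/

import Mathlib

/-! Every vote contributes its weight to `D(x,y)` with sign `+` if it ranks `x` above `y` and `-`
otherwise, so `D(x,y) = 2·(weight preferring x) − (total weight)`. The two fixed votes have equal
weight and opposite `a`/`b` preferences, so a tie forces the `W`-votes preferring `a` to weigh
half of `2K`. -/

/-- The four candidates. -/
inductive Cand : Type
  | p | a | b | c
deriving DecidableEq

instance : Fintype Cand where
  elems := {Cand.p, Cand.a, Cand.b, Cand.c}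
  complete := by intro x; cases x <;> decide

open Cand

/-- Weighted pairwise margin `D(x,y)`. -/
def marg (E : Multiset (ℕ × List Cand)) (x y : Cand) : ℤ :=
  (E.map fun v => if v.2.idxOf x < v.2.idxOf y then (v.1 : ℤ) else -(v.1 : ℤ)).sum

/-- Copeland^α score of `x`: number of pairwise wins plus `α` times the number of
pairwise ties. -/
noncomputable def copelandScore (al : ℝ) (E : Multiset (ℕ × List Cand)) (x : Cand) : ℝ :=
  (((Finset.univ.erase x).filter fun y => 0 < marg E x y).card : ℝ) +
    al * (((Finset.univ.erase x).filter fun y => marg E x y = 0).card : ℝ)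

/-- `x` wins w.r.t. a score function and a tie-breaking priority order. -/
def Wins {S : Type} [LinearOrder S] (score : Cand → S) (prio : Cand → ℕ) (x : Cand) : Prop :=
  ∀ y, y ≠ x → score y < score x ∨ (score y = score x ∧ prio x < prio y)

/-- Tie-breaking order `a ≻ b ≻ c ≻ p`. -/
def prioABCP : Cand → ℕ
  | Cand.a => 0
  | Cand.b => 1
  | Cand.c => 2
  | Cand.p => 3

def weightPreferring (E : Multiset (ℕ × List Cand)) (x y : Cand) : ℕ :=
  ((E.filter fun v => v.2.idxOf x < v.2.idxOf y).map Prod.fst).sum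

theorem marg_add (E F : Multiset (ℕ × List Cand)) (x y : Cand) :
    marg (E + F) x y = marg E x y + marg F x y := by
  simp only [marg, Multiset.map_add, Multiset.sum_add]

theorem marg_eq_two_mul_weightPreferring_sub (E : Multiset (ℕ × List Cand)) (x y : Cand) :
    marg E x y = 2 * (weightPreferring E x y : ℤ) - ((E.map Prod.fst).sum : ℤ) := by
  induction E using Multiset.induction_on with
  | empty => simp [marg, weightPreferring]
  | cons v E ih =>
    simp only [marg, weightPreferring] at ih ⊢
    by_cases h : v.2.idxOf x < v.2.idxOf y <;>
      simp [h, ih] <;> ring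

theorem marg_fixedVotes_a_b (K : ℕ) :
    marg {(K + 1, [a, p, b, c]), (K + 1, [c, b, a, p])} a b = 0 := by
  simp [marg]

theorem stmt_12_general (K : ℕ) (W : Multiset ℕ)
    (hsum : W.sum = 2 * K)
    (V : Multiset (ℕ × List Cand)) (hV : V.map Prod.fst = W)
    (htie : marg (V + {(K + 1, [a, p, b, c]), (K + 1, [c, b, a, p])}) a b = 0) :
    ((V.filter fun v => v.2.idxOf a < v.2.idxOf b).map Prod.fst).sum = K ∧
      ∃ W' ≤ W, W'.sum = K := by
  have hV0 : marg V a b = 0 := by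
    rwa [marg_add, marg_fixedVotes_a_b, add_zero] at htie
  have hweight : weightPreferring V a b = K := by
    have h := marg_eq_two_mul_weightPreferring_sub V a b
    rw [hV0, hV, hsum] at h
    omega
  exact ⟨hweight, _, hV ▸ Multiset.map_le_map (Multiset.filter_le _ _), hweight⟩

/-- If the changed `W`-votes (each ranking `p` first) make the pairwise contest between
`a` and `b` an exact tie, then the total weight of `W`-votes preferring `a` to `b` is
exactly `K`, yielding a sub-multiset of `W` summing to `K`. -/
theorem stmt_12 (K : ℕ) (hK : 0 < K) (W : Multiset ℕ)
    (hpos : ∀ w ∈ W, 0 < w) (hsum : W.sum = 2 * K)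
    (V : Multiset (ℕ × List Cand)) (hV : V.map Prod.fst = W)
    (hrank : ∀ v ∈ V, v.2.Perm [p, a, b, c] ∧ v.2.head? = some p)
    (htie : marg (V + {(K + 1, [a, p, b, c]), (K + 1, [c, b, a, p])}) a b = 0) :
    ((V.filter fun v => v.2.idxOf a < v.2.idxOf b).map Prod.fst).sum = K ∧
      ∃ W' ≤ W, W'.sum = K :=
  stmt_12_general K W hsum V hV htie
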